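/- Let ℰ be an F-expectation satisfying (H1). Then ℰ is translation invariant: for every X ∈ L²(F_T), every t ∈ [0,T] and every Y ∈ L²(F_t), ℰ[X + Y|F_t] = ℰ[X|F_t] + Y almost surely (i.e., (H1) implies (H2)). -/

import Mathlib

open MeasureTheory ProbabilityTheory Set Filter
open scoped ENNReal NNReal RealInnerProductSpace Topology

noncomputable section

/-- A complete probability space `(Ω, m0, P)` carrying a `d`-dimensional standard Brownian
motion `B` with time horizon `T > 0`, together with its (augmented natural) filtration `ℱ` and
an (abstract) Itô stochastic integral `stochInt Z s t = ∫_s^t Z_r dB_r`, characterized by its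
usual properties (additivity, measurability, vanishing conditional expectation, Itô isometry,
and its value on constant integrands). -/
structure BrownianSetting (Ω : Type*) [m0 : MeasurableSpace Ω] (P : Measure Ω)
    (d : ℕ) (T : ℝ) : Type _ where
  prob : IsProbabilityMeasure P
  hT : 0 < T
  ℱ : Filtration ℝ m0
  B : ℝ → Ω → EuclideanSpace ℝ (Fin d)
  B_cont : ∀ ω, Continuous fun t => B t ω
  B_zero : ∀ᵐ ω ∂P, B 0 ω = 0
  B_adapted : Adapted ℱ B
  B_indep : ∀ s t : ℝ, 0 ≤ s → s ≤ t →
    Indep (MeasurableSpace.comap (fun ω => B t ω - B s ω) inferInstance) (ℱ s) P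
  B_gauss : ∀ s t : ℝ, 0 ≤ s → s ≤ t → ∀ u : EuclideanSpace ℝ (Fin d),
    P.map (fun ω => ⟪u, B t ω - B s ω⟫) =
      gaussianReal 0 (Real.toNNReal (‖u‖ ^ 2 * (t - s)))
  stochInt : (ℝ → Ω → EuclideanSpace ℝ (Fin d)) → ℝ → ℝ → Ω → ℝ
  stochInt_add : ∀ Z (s t u : ℝ), s ≤ t → t ≤ u →
    ∀ᵐ ω ∂P, stochInt Z s t ω + stochInt Z t u ω = stochInt Z s u ω
  stochInt_meas : ∀ Z (s t : ℝ), ProgMeasurable ℱ Z →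
    StronglyMeasurable[ℱ t] (stochInt Z s t)
  stochInt_condexp : ∀ Z (s t : ℝ), 0 ≤ s → s ≤ t → ProgMeasurable ℱ Z →
    (∫⁻ ω, (∫⁻ r in Ioc s t, ((‖Z r ω‖₊ : ℝ≥0∞)) ^ 2 ∂volume) ∂P) < ⊤ →
    P[stochInt Z s t|ℱ s] =ᵐ[P] 0
  stochInt_isometry : ∀ Z (s t : ℝ), 0 ≤ s → s ≤ t → ProgMeasurable ℱ Z →
    (∫⁻ ω, ((‖stochInt Z s t ω‖₊ : ℝ≥0∞)) ^ 2 ∂P)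
      = ∫⁻ ω, (∫⁻ r in Ioc s t, ((‖Z r ω‖₊ : ℝ≥0∞)) ^ 2 ∂volume) ∂P
  stochInt_const : ∀ (z : EuclideanSpace ℝ (Fin d)) (s t : ℝ),
    ∀ᵐ ω ∂P, stochInt (fun _ _ => z) s t ω = ⟪z, B t ω - B s ω⟫

variable {Ω : Type*} [m0 : MeasurableSpace Ω] {P : Measure Ω} {d : ℕ} {T : ℝ}

/-- `X ∈ L²(m)`: square-integrable and `m`-measurable. -/
def MemL2 (P : Measure Ω) (m : MeasurableSpace Ω) (X : Ω → ℝ) : Prop :=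
  MemLp X 2 P ∧ StronglyMeasurable[m] X

/-- `X ∈ L^∞(m)`: essentially bounded and `m`-measurable. -/
def MemLinf (P : Measure Ω) (m : MeasurableSpace Ω) (X : Ω → ℝ) : Prop :=
  StronglyMeasurable[m] X ∧ ∃ C : ℝ, ∀ᵐ ω ∂P, |X ω| ≤ C

/-- `φ : [0,∞) → [0,∞)` is continuous, subadditive, increasing, vanishes at `0` and has linear
growth `φ(x) ≤ ν (x + 1)`. -/
structure IsPhi (φ : ℝ → ℝ) (ν : ℝ) : Prop where
  contOn : ContinuousOn φ (Ici 0)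
  nonneg : ∀ x ∈ Ici (0 : ℝ), 0 ≤ φ x
  monoOn : MonotoneOn φ (Ici 0)
  subadd : ∀ x ∈ Ici (0 : ℝ), ∀ y ∈ Ici (0 : ℝ), φ (x + y) ≤ φ x + φ y
  zero : φ 0 = 0
  nu_pos : 0 < ν
  growth : ∀ x ∈ Ici (0 : ℝ), φ x ≤ ν * (x + 1)

/-- `(Y, Z)` is a square-integrable solution (with `Y ∈ S²_F(0,T)`, `Z ∈ L²_F(0,T;ℝ^d)`) of the
BSDE `Y_t = ξ + ∫_t^T h(s, ·, Z_s) ds − ∫_t^T Z_s dB_s`, `t ∈ [0,T]`. -/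
def IsBSDESol (S : BrownianSetting Ω P d T)
    (h : ℝ → Ω → EuclideanSpace ℝ (Fin d) → ℝ) (ξ : Ω → ℝ)
    (Y : ℝ → Ω → ℝ) (Z : ℝ → Ω → EuclideanSpace ℝ (Fin d)) : Prop :=
  Adapted S.ℱ Y ∧ ProgMeasurable S.ℱ Z ∧
  (∀ ω, ContinuousOn (fun t => Y t ω) (Icc 0 T)) ∧
  MemLp (fun ω => ⨆ t ∈ Icc (0 : ℝ) T, |Y t ω|) 2 P ∧
  (∫⁻ ω, (∫⁻ r in Ioc 0 T, ((‖Z r ω‖₊ : ℝ≥0∞)) ^ 2 ∂volume) ∂P) < ⊤ ∧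
  ∀ t ∈ Icc (0 : ℝ) T, ∀ᵐ ω ∂P,
    Y t ω = ξ ω + (∫ s in Ioc t T, h s ω (Z s ω)) - S.stochInt Z t T ω

/-- A filtration-consistent nonlinear expectation (`F`-expectation): a system of operators
`E t : L²(F_T) → L²(F_t)`, `t ∈ [0,T]`, which is monotone, preserves `F_t`-measurable random
variables, is time-consistent, and satisfies the 0-1 law. -/
structure FExpectation (Ω : Type*) [m0 : MeasurableSpace Ω] (P : Measure Ω)
    (T : ℝ) (ℱ : Filtration ℝ m0) where
  E : ℝ → (Ω → ℝ) → Ω → ℝ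
  maps_L2 : ∀ t ∈ Icc (0 : ℝ) T, ∀ X, MemL2 P (ℱ T) X → MemL2 P (ℱ t) (E t X)
  congr : ∀ t ∈ Icc (0 : ℝ) T, ∀ X X' : Ω → ℝ, X =ᵐ[P] X' → E t X =ᵐ[P] E t X'
  mono : ∀ t ∈ Icc (0 : ℝ) T, ∀ X Y : Ω → ℝ, MemL2 P (ℱ T) X → MemL2 P (ℱ T) Y →
    (∀ᵐ ω ∂P, Y ω ≤ X ω) → ∀ᵐ ω ∂P, E t Y ω ≤ E t X ω
  const_pres : ∀ t ∈ Icc (0 : ℝ) T, ∀ X, MemL2 P (ℱ t) X → E t X =ᵐ[P] X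
  tower : ∀ s t : ℝ, 0 ≤ s → s ≤ t → t ≤ T → ∀ X, MemL2 P (ℱ T) X →
    E s (E t X) =ᵐ[P] E s X
  zero_one : ∀ t ∈ Icc (0 : ℝ) T, ∀ X, MemL2 P (ℱ T) X → ∀ A : Set Ω,
    MeasurableSet[ℱ t] A → E t (A.indicator X) =ᵐ[P] A.indicator (E t X)

/-- Condition (H1): the `F`-expectation `ℰ` is dominated by the `g`-expectation `E^φ` with
generator `φ(|z|)`: for all `X, Y ∈ L²(F_T)` and `t ∈ [0,T]`,
`ℰ[X|F_t] − ℰ[Y|F_t] ≤ E^φ[X − Y|F_t]` a.s. -/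
def SatisfiesH1 (S : BrownianSetting Ω P d T) (φ : ℝ → ℝ)
    (ℰ : FExpectation Ω P T S.ℱ) : Prop :=
  ∀ X Y : Ω → ℝ, MemL2 P (S.ℱ T) X → MemL2 P (S.ℱ T) Y →
    ∀ t ∈ Icc (0 : ℝ) T, ∀ Yφ Zφ,
      IsBSDESol S (fun _ _ z => φ ‖z‖) (fun ω => X ω - Y ω) Yφ Zφ →
      ∀ᵐ ω ∂P, ℰ.E t X ω - ℰ.E t Y ω ≤ Yφ t ω

/-- A real function is RCLL (right-continuous with left limits) on `[a,b]`. -/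
def IsRCLLOn (f : ℝ → ℝ) (a b : ℝ) : Prop :=
  (∀ t ∈ Ico a b, ContinuousWithinAt f (Ici t) t) ∧
  (∀ t ∈ Ioc a b, ∃ l : ℝ, Tendsto f (𝓝[<] t) (𝓝 l))

/-- `Y` is an `ℰ`-supermartingale on `[0,T]`. -/
def IsESupermartingale (S : BrownianSetting Ω P d T) (ℰ : FExpectation Ω P T S.ℱ)
    (Y : ℝ → Ω → ℝ) : Prop :=
  (∀ t ∈ Icc (0 : ℝ) T, MemL2 P (S.ℱ t) (Y t)) ∧
  ∀ s t : ℝ, 0 ≤ s → s ≤ t → t ≤ T → ∀ᵐ ω ∂P, ℰ.E s (Y t) ω ≤ Y s ω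

/-- `Y` is an `ℰ`-submartingale on `[0,T]`. -/
def IsESubmartingale (S : BrownianSetting Ω P d T) (ℰ : FExpectation Ω P T S.ℱ)
    (Y : ℝ → Ω → ℝ) : Prop :=
  (∀ t ∈ Icc (0 : ℝ) T, MemL2 P (S.ℱ t) (Y t)) ∧
  ∀ s t : ℝ, 0 ≤ s → s ≤ t → t ≤ T → ∀ᵐ ω ∂P, Y s ω ≤ ℰ.E s (Y t) ω

/-- `Y` is an `ℰ`-martingale on `[0,T]`. -/
def IsEMartingale (S : BrownianSetting Ω P d T) (ℰ : FExpectation Ω P T S.ℱ)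
    (Y : ℝ → Ω → ℝ) : Prop :=
  (∀ t ∈ Icc (0 : ℝ) T, MemL2 P (S.ℱ t) (Y t)) ∧
  ∀ s t : ℝ, 0 ≤ s → s ≤ t → t ≤ T → ∀ᵐ ω ∂P, ℰ.E s (Y t) ω = Y s ω

/-- `y` solves the BSDE `ℰ(f,T,X,z)` under the `F`-expectation `ℰ`:
`y_t + z·B_t = ℰ[X + z·B_T + ∫_t^T f(s, y_s) ds | F_t]` for all `t ∈ [0,T]`,
with `y` continuous and adapted. -/
def SolvesEBSDE (S : BrownianSetting Ω P d T) (ℰ : FExpectation Ω P T S.ℱ)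
    (f : ℝ → Ω → ℝ → ℝ) (X : Ω → ℝ) (z : EuclideanSpace ℝ (Fin d))
    (y : ℝ → Ω → ℝ) : Prop :=
  Adapted S.ℱ y ∧ (∀ ω, ContinuousOn (fun t => y t ω) (Icc 0 T)) ∧
  ∀ t ∈ Icc (0 : ℝ) T, ∀ᵐ ω ∂P,
    y t ω + ⟪z, S.B t ω⟫ =
      ℰ.E t (fun ω' => X ω' + ⟪z, S.B T ω'⟫ + ∫ s in Ioc t T, f s ω' (y s ω')) ω

/-- `y ∈ S^∞_F(0,T)`-type uniform bound. -/
def BddUnif (P : Measure Ω) (T : ℝ) (y : ℝ → Ω → ℝ) : Prop :=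
  ∃ C : ℝ, ∀ t ∈ Icc (0 : ℝ) T, ∀ᵐ ω ∂P, |y t ω| ≤ C

/-- `(g, Z) ∈ L²_F(0,T) × L²_F(0,T;ℝ^d)` represents the `ℰ`-martingale `t ↦ ℰ[X|F_t]`:
`|g_t| ≤ φ(|Z_t|)` and `ℰ[X|F_t] = X + ∫_t^T g_s ds − ∫_t^T Z_s dB_s`. -/
def RepPair (S : BrownianSetting Ω P d T) (ℰ : FExpectation Ω P T S.ℱ) (φ : ℝ → ℝ)
    (X : Ω → ℝ) (g : ℝ → Ω → ℝ) (Z : ℝ → Ω → EuclideanSpace ℝ (Fin d)) : Prop :=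
  ProgMeasurable S.ℱ g ∧ ProgMeasurable S.ℱ Z ∧
  (∫⁻ ω, (∫⁻ r in Ioc 0 T, ((‖g r ω‖₊ : ℝ≥0∞)) ^ 2 ∂volume) ∂P) < ⊤ ∧
  (∫⁻ ω, (∫⁻ r in Ioc 0 T, ((‖Z r ω‖₊ : ℝ≥0∞)) ^ 2 ∂volume) ∂P) < ⊤ ∧
  (∀ᵐ r ∂volume.restrict (Ioc (0 : ℝ) T), ∀ᵐ ω ∂P, |g r ω| ≤ φ ‖Z r ω‖) ∧
  ∀ t ∈ Icc (0 : ℝ) T, ∀ᵐ ω ∂P,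
    ℰ.E t X ω = X ω + (∫ s in Ioc t T, g s ω) - S.stochInt Z t T ω

/-! For a constant `c`, (H1) applied to `(X + c, X)` and to `(X, X + c)` bounds
`ℰ[X + c|ℱ_t] - ℰ[X|ℱ_t]` above by `c` and below by `c`: when `φ 0 = 0` the BSDE with a constant
terminal value is solved by that constant with `Z = 0`. The 0-1 law extends this, level set by
level set, to `ℱ_t`-measurable `Y` with countably many values, and a general `Y` lies between such
a `Y'` and `Y' + ε`, so monotonicity gives the identity up to `ε`. -/

lemma isBSDESol_const (S : BrownianSetting Ω P d T)
    {h : ℝ → Ω → EuclideanSpace ℝ (Fin d) → ℝ} (hh : ∀ s ω, h s ω 0 = 0) (c : ℝ) :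
    IsBSDESol S h (fun _ => c) (fun _ _ => c) (fun _ _ => 0) := by
  have := S.prob
  refine ⟨fun _ => measurable_const, isStronglyProgressive_const _ _, fun _ => continuousOn_const,
    memLp_const _, by simp, fun s _ => ?_⟩
  filter_upwards [S.stochInt_const 0 s T] with ω hω
  simp [hω, hh]

section MemL2

variable {ℱ : Filtration ℝ m0} {t : ℝ}

lemma MemL2.add {X Y : Ω → ℝ} (hX : MemL2 P (ℱ t) X) (hY : MemL2 P (ℱ t) Y) :
    MemL2 P (ℱ t) (fun ω => X ω + Y ω) :=
  ⟨hX.1.add hY.1, hX.2.add hY.2⟩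

lemma MemL2.add_const [IsFiniteMeasure P] {X : Ω → ℝ} (hX : MemL2 P (ℱ t) X) (c : ℝ) :
    MemL2 P (ℱ t) (fun ω => X ω + c) :=
  ⟨hX.1.add (memLp_const c), hX.2.add stronglyMeasurable_const⟩

lemma MemL2.filtration_mono {s : ℝ} {X : Ω → ℝ} (hX : MemL2 P (ℱ s) X) (hst : s ≤ t) :
    MemL2 P (ℱ t) X :=
  ⟨hX.1, hX.2.mono (ℱ.mono hst)⟩

lemma exists_memL2_countable_range_approx [IsFiniteMeasure P] {Y : Ω → ℝ}
    (hY : MemL2 P (ℱ t) Y) {ε : ℝ} (hε : 0 < ε) :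
    ∃ Y' : Ω → ℝ, MemL2 P (ℱ t) Y' ∧ (range Y').Countable ∧
      ∀ ω, Y' ω ≤ Y ω ∧ Y ω ≤ Y' ω + ε := by
  set Y' : Ω → ℝ := fun ω => ε * ⌊Y ω / ε⌋
  have hbounds : ∀ ω, Y' ω ≤ Y ω ∧ Y ω ≤ Y' ω + ε := fun ω => by
    have h₁ := (le_div_iff₀' hε).1 (Int.floor_le (Y ω / ε))
    have h₂ := (div_lt_iff₀' hε).1 (Int.lt_floor_add_one (Y ω / ε))
    constructor <;> simp only [Y'] <;> linarith
  have hY'm : StronglyMeasurable[ℱ t] Y' :=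
    ((measurable_const_mul ε).comp <| measurable_from_top.comp <|
      Int.measurable_floor.comp <| (measurable_div_const ε).comp hY.2.measurable).stronglyMeasurable
  have hgap : MemLp (fun ω => Y ω - Y' ω) 2 P := by
    refine MemLp.of_bound ((hY.2.sub hY'm).mono (ℱ.le t)).aestronglyMeasurable ε
      (ae_of_all _ fun ω => ?_)
    rw [Real.norm_eq_abs, abs_le]
    constructor <;> linarith [hbounds ω]
  refine ⟨Y', ⟨by simpa only [Pi.sub_def, sub_sub_cancel] using hY.1.sub hgap, hY'm⟩, ?_,
    hbounds⟩
  refine (countable_range fun k : ℤ => ε * k).mono ?_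
  rintro _ ⟨ω, rfl⟩
  exact ⟨⌊Y ω / ε⌋, rfl⟩

end MemL2

lemma FExpectation.ae_eq_of_eqOn {ℱ : Filtration ℝ m0} (ℰ : FExpectation Ω P T ℱ) {t : ℝ}
    (ht : t ∈ Icc 0 T) {X X' : Ω → ℝ} (hX : MemL2 P (ℱ T) X) (hX' : MemL2 P (ℱ T) X')
    {A : Set Ω} (hA : MeasurableSet[ℱ t] A) (hXX' : EqOn X X' A) :
    ∀ᵐ ω ∂P, ω ∈ A → ℰ.E t X ω = ℰ.E t X' ω := by
  filter_upwards [ℰ.zero_one t ht X hX A hA, ℰ.zero_one t ht X' hX' A hA] with ω h h' hω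
  rw [indicator_congr hXX', h'] at h
  simpa [indicator_of_mem hω] using h.symm

namespace SatisfiesH1

variable {S : BrownianSetting Ω P d T} {φ : ℝ → ℝ} {ℰ : FExpectation Ω P T S.ℱ}
  {X : Ω → ℝ} {t : ℝ}

lemma E_add_const (hH1 : SatisfiesH1 S φ ℰ) (hφ0 : φ 0 = 0) (hX : MemL2 P (S.ℱ T) X)
    (ht : t ∈ Icc 0 T) (c : ℝ) :
    ∀ᵐ ω ∂P, ℰ.E t (fun ω => X ω + c) ω = ℰ.E t X ω + c := by
  have := S.prob
  have hsol (c' : ℝ) : IsBSDESol S (fun _ _ z => φ ‖z‖) (fun _ => c') (fun _ _ => c')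
      (fun _ _ => 0) := isBSDESol_const S (by simp [hφ0]) c'
  have hXc := hX.add_const c
  have hup := hH1 _ X hXc hX t ht _ _ (by simpa only [add_sub_cancel_left] using hsol c)
  have hdown := hH1 X _ hX hXc t ht _ _ (by simpa only [sub_add_cancel_left] using hsol (-c))
  filter_upwards [hup, hdown] with ω hup hdown
  linarith

lemma E_add_of_countable_range (hH1 : SatisfiesH1 S φ ℰ) (hφ0 : φ 0 = 0)
    (hX : MemL2 P (S.ℱ T) X) (ht : t ∈ Icc 0 T) {Y : Ω → ℝ} (hY : MemL2 P (S.ℱ t) Y)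
    (hYc : (range Y).Countable) :
    ∀ᵐ ω ∂P, ℰ.E t (fun ω => X ω + Y ω) ω = ℰ.E t X ω + Y ω := by
  have := S.prob
  have hlevel : ∀ y ∈ range Y, ∀ᵐ ω ∂P, Y ω = y →
      ℰ.E t (fun ω => X ω + Y ω) ω = ℰ.E t X ω + Y ω := fun y _ => by
    have hA : MeasurableSet[S.ℱ t] (Y ⁻¹' {y}) := hY.2.measurable (measurableSet_singleton y)
    filter_upwards [ℰ.ae_eq_of_eqOn ht (hX.add (hY.filtration_mono ht.2)) (hX.add_const y) hA
        fun ω (hω : Y ω = y) => by simp [hω], hH1.E_add_const hφ0 hX ht y] with ω hlocal hconst hω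
    rw [hlocal hω, hconst, hω]
  filter_upwards [(ae_ball_iff hYc).2 hlevel] with ω h
  exact h _ (mem_range_self ω) rfl

lemma abs_E_add_sub_le (hH1 : SatisfiesH1 S φ ℰ) (hφ0 : φ 0 = 0) (hX : MemL2 P (S.ℱ T) X)
    (ht : t ∈ Icc 0 T) {Y : Ω → ℝ} (hY : MemL2 P (S.ℱ t) Y) {ε : ℝ} (hε : 0 < ε) :
    ∀ᵐ ω ∂P, |ℰ.E t (fun ω => X ω + Y ω) ω - (ℰ.E t X ω + Y ω)| ≤ ε := by
  have := S.prob
  obtain ⟨Y', hY', hY'c, hbounds⟩ := exists_memL2_countable_range_approx hY hε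
  have hXY := hX.add (hY.filtration_mono ht.2)
  have hXY' := hX.add (hY'.filtration_mono ht.2)
  have hlower := ℰ.mono t ht _ _ hXY hXY' (ae_of_all _ fun ω => by linarith [hbounds ω])
  have hupper := ℰ.mono t ht _ _ (hXY'.add_const ε) hXY
    (ae_of_all _ fun ω => by linarith [hbounds ω])
  filter_upwards [hlower, hupper, hH1.E_add_of_countable_range hφ0 hX ht hY' hY'c,
    hH1.E_add_const hφ0 hXY' ht ε] with ω hlower hupper hY'eq hεeq
  rw [abs_le]
  constructor <;> linarith [hbounds ω]

end SatisfiesH1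

/-- (H1) implies (H2): `ℰ[X + Y|F_t] = ℰ[X|F_t] + Y` a.s. for `Y ∈ L²(F_t)`. -/
theorem fexp_translation_invariance
    {Ω : Type*} [m0 : MeasurableSpace Ω] {P : Measure Ω} {d : ℕ} {T : ℝ}
    (S : BrownianSetting Ω P d T) (φ : ℝ → ℝ) (ν : ℝ) (hφ : IsPhi φ ν)
    (ℰ : FExpectation Ω P T S.ℱ) (hH1 : SatisfiesH1 S φ ℰ)
    (X : Ω → ℝ) (hX : MemL2 P (S.ℱ T) X)
    (t : ℝ) (ht : t ∈ Icc (0 : ℝ) T)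
    (Y : Ω → ℝ) (hY : MemL2 P (S.ℱ t) Y) :
    ∀ᵐ ω ∂P, ℰ.E t (fun ω' => X ω' + Y ω') ω = ℰ.E t X ω + Y ω := by
  have happrox (n : ℕ) := hH1.abs_E_add_sub_le hφ.zero hX ht hY (Nat.one_div_pos_of_nat (n := n))
  filter_upwards [ae_all_iff.2 happrox] with ω hω
  refine eq_of_forall_dist_le fun ε hε => ?_
  obtain ⟨n, hn⟩ := exists_nat_one_div_lt hε
  exact (hω n).trans hn.le
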